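/- If a semigroup S is right pseudo-finite, then the monoid S^1 obtained by adjoining an identity is right pseudo-finite. -/

import Mathlib

def sStep {S : Type*} [Semigroup S] (X : Set S) (a b : S) : Prop :=
  ∃ x ∈ X, ∃ y ∈ X, (a = x ∧ b = y) ∨ ∃ s : S, a = x * s ∧ b = y * s

def seqN {α : Type*} (r : α → α → Prop) : ℕ → α → α → Prop
  | 0, a, b => a = b
  | n + 1, a, b => ∃ c, r a c ∧ seqN r n c b

def RightPseudoFinite (S : Type*) [Semigroup S] : Prop :=
  ∃ X : Finset S, ∃ N : ℕ, ∀ a b : S, ∃ n ≤ N, seqN (sStep (X : Set S)) n a b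

/-!
If `S` is empty, `S¹` is trivial. Otherwise enlarge the finite set `X` witnessing that `S` is
right pseudo-finite so that it contains some `u ∈ S`, and take `X' = {1} ∪ X` in `S¹`.
Sequences in `S` stay sequences in `S¹`, and `1` is joined to `u` by the single step
`1 = 1 · 1`, `u · 1 = u`; so any two elements of `S¹` are joined by an `X'`-sequence of length
at most `N + 1`.
-/

section Sequences

variable {α β : Type*}

theorem seqN_map {r : α → α → Prop} {r' : β → β → Prop} (f : α → β)
    (hf : ∀ a b, r a b → r' (f a) (f b)) :
    ∀ n a b, seqN r n a b → seqN r' n (f a) (f b)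
  | 0, _, _, rfl => rfl
  | n + 1, _, _, ⟨c, hac, hcb⟩ => ⟨f c, hf _ _ hac, seqN_map f hf n c _ hcb⟩

theorem seqN_mono {r r' : α → α → Prop} (h : ∀ a b, r a b → r' a b) (n : ℕ) (a b : α) :
    seqN r n a b → seqN r' n a b :=
  seqN_map id h n a b

theorem seqN_succ_of_seqN {r : α → α → Prop} :
    ∀ n a c b, seqN r n a c → r c b → seqN r (n + 1) a b
  | 0, _, _, b, rfl, hcb => ⟨b, hcb, rfl⟩
  | n + 1, _, _, _, ⟨d, had, hdc⟩, hcb => ⟨d, had, seqN_succ_of_seqN n d _ _ hdc hcb⟩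

end Sequences

section Steps

variable {S T : Type*} [Semigroup S] [Semigroup T]

theorem sStep_mono {X Y : Set S} (h : X ⊆ Y) {a b : S} (hab : sStep X a b) : sStep Y a b :=
  let ⟨x, hx, y, hy, hxy⟩ := hab
  ⟨x, h hx, y, h hy, hxy⟩

theorem sStep_of_mem {X : Set S} {x y : S} (hx : x ∈ X) (hy : y ∈ X) : sStep X x y :=
  ⟨x, hx, y, hy, Or.inl ⟨rfl, rfl⟩⟩

theorem sStep_map (f : S →ₙ* T) {X : Set S} {a b : S} (hab : sStep X a b) :
    sStep (f '' X) (f a) (f b) := by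
  obtain ⟨x, hx, y, hy, ⟨ha, hb⟩ | ⟨s, ha, hb⟩⟩ := hab
  · rw [ha, hb]
    exact sStep_of_mem ⟨x, hx, rfl⟩ ⟨y, hy, rfl⟩
  · rw [ha, hb]
    exact ⟨f x, ⟨x, hx, rfl⟩, f y, ⟨y, hy, rfl⟩, Or.inr ⟨f s, map_mul f x s, map_mul f y s⟩⟩

theorem seqN_sStep_map (f : S →ₙ* T) {X : Set S} {Y : Set T} (hXY : f '' X ⊆ Y) {n : ℕ}
    {a b : S} (hab : seqN (sStep X) n a b) : seqN (sStep Y) n (f a) (f b) :=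
  seqN_map f (fun _ _ h => sStep_mono hXY (sStep_map f h)) n a b hab

end Steps

theorem RightPseudoFinite.of_subsingleton (S : Type*) [Semigroup S] [Subsingleton S] :
    RightPseudoFinite S :=
  ⟨∅, 0, fun a b => ⟨0, le_rfl, Subsingleton.elim a b⟩⟩

theorem RightPseudoFinite.exists_superset {S : Type*} [Semigroup S] [DecidableEq S]
    (h : RightPseudoFinite S) (Y : Finset S) :
    ∃ X : Finset S, Y ⊆ X ∧ ∃ N : ℕ, ∀ a b : S, ∃ n ≤ N, seqN (sStep (X : Set S)) n a b := by
  obtain ⟨X, N, hX⟩ := h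
  refine ⟨Y ∪ X, Finset.subset_union_left, N, fun a b => ?_⟩
  obtain ⟨n, hn, hab⟩ := hX a b
  exact ⟨n, hn, seqN_mono (fun _ _ => sStep_mono (by simp)) n a b hab⟩

/-- If a semigroup `S` is right pseudo-finite, then so is the monoid `S¹ = WithOne S`
obtained by adjoining an identity. -/
theorem rightPseudoFinite_withOne {S : Type*} [Semigroup S]
    (h : RightPseudoFinite S) : RightPseudoFinite (WithOne S) := by
  classical
  rcases isEmpty_or_nonempty S with _ | ⟨⟨u⟩⟩
  · exact RightPseudoFinite.of_subsingleton _
  obtain ⟨X, huX, N, hX⟩ := h.exists_superset {u}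
  let X' : Finset (WithOne S) := insert 1 (X.image (↑))
  have hXX' : WithOne.coeMulHom '' (X : Set S) ⊆ X' := by
    rintro _ ⟨x, hx, rfl⟩
    exact Finset.mem_insert_of_mem (Finset.mem_image_of_mem _ hx)
  have lift (p q : S) : ∃ n ≤ N, seqN (sStep (X' : Set (WithOne S))) n p q :=
    let ⟨n, hn, hpq⟩ := hX p q
    ⟨n, hn, seqN_sStep_map WithOne.coeMulHom hXX' hpq⟩
  have h1 : (1 : WithOne S) ∈ X' := Finset.mem_insert_self _ _
  have hu : (u : WithOne S) ∈ X' := hXX' ⟨u, huX (Finset.mem_singleton_self u), rfl⟩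
  refine ⟨X', N + 1, fun a b => ?_⟩
  cases a with
  | one =>
    cases b with
    | one => exact ⟨0, Nat.zero_le _, rfl⟩
    | coe q =>
      obtain ⟨n, hn, huq⟩ := lift u q
      exact ⟨n + 1, by omega, _, sStep_of_mem h1 hu, huq⟩
  | coe p =>
    cases b with
    | one =>
      obtain ⟨n, hn, hpu⟩ := lift p u
      exact ⟨n + 1, by omega, seqN_succ_of_seqN n _ _ _ hpu (sStep_of_mem hu h1)⟩
    | coe q =>
      obtain ⟨n, hn, hpq⟩ := lift p q
      exact ⟨n, by omega, hpq⟩
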